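/- arXiv:2005.04615 — 3 statements merged into one kernel-verified Lean document; each statement's English description precedes it below -/
import Mathlib

section
/- (Lyapunov–Schmidt reduction) Let φ : ℝⁿ × ℝ → ℝⁿ be C², φ(x₀,0) = 0, L := D_xφ(x₀,0), with dim ker L = k > 0. Choose complements N(L)^⊥ of ker L and R(L)^⊥ of range L, and let p be the projection onto R(L) along R(L)^⊥. Then there exist neighborhoods A of (0,0) in ker L × ℝ and B of 0 in N(L)^⊥, and a C² map η : A → B with η(0,0) = 0, such that for each (ξ,ε) ∈ A, η(ξ,ε) is the unique element of B satisfying p·φ(ξ + η(ξ,ε) + x₀, ε) = 0. -/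
/-!
Write the unknown as `ξ + y + x₀` with `y ∈ N` and project the equation onto `range L` by `p`.
The map `(ξ, ε, y) ↦ p φ(ξ + y + x₀, ε) ∈ range L` has partial derivative `y ↦ L y` in `y` at
the base point, and this is an isomorphism `N ≃ range L` because `N` is a complement of `ker L`.
The implicit function theorem then solves for `y = η(ξ, ε)`; continuity of `η` lets the region
of uniqueness be taken to be a product `A × B`.
-/

open Filter Topology
open scoped ContDiff

section Implicit

variable {𝕜 : Type*} [RCLike 𝕜]
  {E₁ : Type*} [NormedAddCommGroup E₁] [NormedSpace 𝕜 E₁] [CompleteSpace E₁]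
  {E₂ : Type*} [NormedAddCommGroup E₂] [NormedSpace 𝕜 E₂] [CompleteSpace E₂]
  {F : Type*} [NormedAddCommGroup F] [NormedSpace 𝕜 F] [CompleteSpace F]

theorem ContDiffAt.exists_contDiffOn_implicitFunction {n : WithTop ℕ∞} {f : E₁ × E₂ → F}
    {u : E₁ × E₂} (hf : ContDiffAt 𝕜 n f u) (hn₀ : n ≠ 0) (hn : n ≠ ∞)
    (hinv : (fderiv 𝕜 f u ∘L .inr 𝕜 E₁ E₂).IsInvertible) :
    ∃ U ∈ 𝓝 u.1, ∃ V ∈ 𝓝 u.2, ∃ ψ : E₁ → E₂, ContDiffOn 𝕜 n ψ U ∧ ψ u.1 = u.2 ∧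
      ∀ x ∈ U, ψ x ∈ V ∧ f (x, ψ x) = f u ∧ ∀ y ∈ V, f (x, y) = f u → y = ψ x := by
  set ψ := hf.implicitFunction hn₀ hinv
  have hψu : ψ u.1 = u.2 := hf.implicitFunction_apply_self hn₀ hinv
  have hψ : ContDiffAt 𝕜 n ψ u.1 := hf.contDiffAt_implicitFunction hn₀ hinv
  obtain ⟨U, hU, V, hV, hUV⟩ := mem_nhds_prod_iff.mp
    (hf.eventually_apply_eq_iff_implicitFunction hn₀ hinv)
  have hψV : ψ ⁻¹' V ∈ 𝓝 u.1 := hψ.continuousAt.preimage_mem_nhds (hψu ▸ hV)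
  refine ⟨U ∩ ψ ⁻¹' V ∩ {x | ContDiffAt 𝕜 n ψ x}, inter_mem (inter_mem hU hψV) (hψ.eventually hn),
    V, hV, ψ, fun x hx => hx.2.contDiffWithinAt, hψu, fun x ⟨⟨hxU, hxV⟩, _⟩ => ⟨hxV, ?_, ?_⟩⟩
  · exact (hUV (Set.mk_mem_prod hxU hxV)).2 rfl
  · exact fun y hy hfy => ((hUV (Set.mk_mem_prod hxU hy)).1 hfy).symm

end Implicit

namespace LinearMap

variable {R M M₂ : Type*} [Ring R] [AddCommGroup M] [Module R M] [AddCommGroup M₂] [Module R M₂]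

noncomputable def equivRangeOfIsComplKer (f : M →ₗ[R] M₂) {N : Submodule R M}
    (h : IsCompl (ker f) N) : N ≃ₗ[R] range f :=
  ((ker f).quotientEquivOfIsCompl N h).symm.trans f.quotKerEquivRange

@[simp]
theorem coe_equivRangeOfIsComplKer_apply (f : M →ₗ[R] M₂) {N : Submodule R M}
    (h : IsCompl (ker f) N) (y : N) : (f.equivRangeOfIsComplKer h y : M₂) = f y := by
  simp [equivRangeOfIsComplKer]

end LinearMap

section LyapunovSchmidt

variable {𝕜 : Type*} [RCLike 𝕜]
  {E : Type*} [NormedAddCommGroup E] [NormedSpace 𝕜 E] [FiniteDimensional 𝕜 E]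
  {F : Type*} [NormedAddCommGroup F] [NormedSpace 𝕜 F] [FiniteDimensional 𝕜 F]
  {P : Type*} [NormedAddCommGroup P] [NormedSpace 𝕜 P] [CompleteSpace P]

theorem ContDiffAt.exists_contDiffOn_lyapunovSchmidt {n : WithTop ℕ∞} {φ : E × P → F} {x₀ : E}
    {ε₀ : P} (hφ : ContDiffAt 𝕜 n φ (x₀, ε₀)) (hn₀ : n ≠ 0) (hn : n ≠ ∞) (hx₀ : φ (x₀, ε₀) = 0)
    {L : E →L[𝕜] F} (hL : HasFDerivAt (fun x => φ (x, ε₀)) L x₀)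
    {N : Submodule 𝕜 E} (hN : IsCompl (LinearMap.ker (L : E →ₗ[𝕜] F)) N)
    {p : F →ₗ[𝕜] F} (hp_range : LinearMap.range p ≤ LinearMap.range (L : E →ₗ[𝕜] F))
    (hp_id : ∀ x ∈ LinearMap.range (L : E →ₗ[𝕜] F), p x = x) :
    ∃ A ∈ 𝓝 ((0 : E), ε₀), ∃ B ∈ 𝓝 (0 : E), ∃ η : E × P → E,
      ContDiffOn 𝕜 n η A ∧ η (0, ε₀) = 0 ∧
      ∀ ξε ∈ A, η ξε ∈ B ∧ η ξε ∈ N ∧ p (φ (ξε.1 + η ξε + x₀, ξε.2)) = 0 ∧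
        ∀ y ∈ B, y ∈ N → p (φ (ξε.1 + y + x₀, ξε.2)) = 0 → y = η ξε := by
  have : CompleteSpace E := FiniteDimensional.complete 𝕜 E
  set R := LinearMap.range (L : E →ₗ[𝕜] F)
  let q : F →L[𝕜] R :=
    LinearMap.toContinuousLinearMap (p.codRestrict R fun x => hp_range ⟨x, rfl⟩)
  let f : (E × P) × N → R := fun z => q (φ (z.1.1 + z.2 + x₀, z.1.2))
  have hf : ContDiffAt 𝕜 n f ((0, ε₀), 0) := by
    have hval : ContDiff 𝕜 n (Subtype.val : N → E) := N.subtypeL.contDiff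
    exact q.contDiff.contDiffAt.comp _ (ContDiffAt.comp _ (by simpa using hφ) (by fun_prop))
  have hfu : f ((0, ε₀), 0) = 0 := by simp [f, hx₀]
  have hpartial : HasFDerivAt (fun y : N => f ((0, ε₀), y)) (q ∘L L ∘L N.subtypeL) 0 := by
    have hL' : HasFDerivAt (fun x => φ (x, ε₀)) L (N.subtypeL 0 + x₀) := by simpa using hL
    refine (q.hasFDerivAt.comp 0 (hL'.comp 0 (N.subtypeL.hasFDerivAt.add_const x₀)))
      |>.congr_of_eventuallyEq (.of_forall fun y => ?_)
    simp [f]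
  have hinv : (fderiv 𝕜 f ((0, ε₀), 0) ∘L .inr 𝕜 (E × P) N).IsInvertible := by
    refine ⟨((L : E →ₗ[𝕜] F).equivRangeOfIsComplKer hN).toContinuousLinearEquiv, ?_⟩
    rw [((hf.differentiableAt (by simpa [Order.one_le_iff_ne_zero] using hn₀)).hasFDerivAt.comp 0
      (hasFDerivAt_prodMk_right _ _)).unique hpartial]
    ext y
    simpa [q] using (hp_id _ ⟨y, rfl⟩).symm
  obtain ⟨U, hU, V, hV, ψ, hψ, hψ0, hψU⟩ := hf.exists_contDiffOn_implicitFunction hn₀ hn hinv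
  obtain ⟨B, hB, hBV⟩ := (mem_nhds_subtype (N : Set E) 0 V).mp hV
  let η : E × P → E := fun z => ψ z
  have hη : ContDiffOn 𝕜 n η U := N.subtypeL.contDiff.comp_contDiffOn hψ
  have hη0 : η (0, ε₀) = 0 := by simp [η, hψ0]
  refine ⟨U ∩ η ⁻¹' B, inter_mem hU ((hη.continuousOn.continuousAt hU).preimage_mem_nhds
    (by simpa [hη0] using hB)), B, hB, η, hη.mono Set.inter_subset_left, hη0, ?_⟩
  rintro ξε ⟨hξεU, hξεB⟩
  obtain ⟨-, hsol, huniq⟩ := hψU ξε hξεU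
  refine ⟨hξεB, (ψ ξε).2, ?_, fun y hyB hyN hy => ?_⟩
  · simpa [f, q] using congrArg Subtype.val (hsol.trans hfu)
  · refine congrArg Subtype.val (huniq ⟨y, hyN⟩ (hBV hyB) (hfu ▸ ?_))
    ext
    simpa [f, q] using hy

end LyapunovSchmidt

theorem lyapunov_schmidt_reduction_general
    (n : ℕ) (φ : (Fin n → ℝ) × ℝ → (Fin n → ℝ)) (hφ : ContDiff ℝ 2 φ)
    (x₀ : Fin n → ℝ) (hx₀ : φ (x₀, 0) = 0)
    (L : (Fin n → ℝ) →L[ℝ] (Fin n → ℝ))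
    (hL : L = fderiv ℝ (fun x => φ (x, 0)) x₀)
    (N : Submodule ℝ (Fin n → ℝ)) (hN : IsCompl (LinearMap.ker (L : (Fin n → ℝ) →ₗ[ℝ] (Fin n → ℝ))) N)
    (p : (Fin n → ℝ) →ₗ[ℝ] (Fin n → ℝ))
    (hp_range : LinearMap.range p = LinearMap.range (L : (Fin n → ℝ) →ₗ[ℝ] (Fin n → ℝ)))
    (hp_id : ∀ x ∈ LinearMap.range (L : (Fin n → ℝ) →ₗ[ℝ] (Fin n → ℝ)), p x = x) :
    ∃ A ∈ nhds ((0 : Fin n → ℝ), (0 : ℝ)), ∃ B ∈ nhds (0 : Fin n → ℝ),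
      ∃ η : (Fin n → ℝ) × ℝ → (Fin n → ℝ),
        ContDiffOn ℝ 2 η A ∧ η (0, 0) = 0 ∧
        ∀ ξε ∈ A, ξε.1 ∈ LinearMap.ker (L : (Fin n → ℝ) →ₗ[ℝ] (Fin n → ℝ)) →
          η ξε ∈ B ∧ η ξε ∈ N ∧
          p (φ (ξε.1 + η ξε + x₀, ξε.2)) = 0 ∧
          ∀ y ∈ B, y ∈ N → p (φ (ξε.1 + y + x₀, ξε.2)) = 0 → y = η ξε := by
  have hφ₁ : Differentiable ℝ φ := hφ.differentiable (by norm_num)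
  have hderiv : HasFDerivAt (fun x => φ (x, 0)) L x₀ := by
    rw [hL]
    exact (by fun_prop : DifferentiableAt ℝ (fun x => φ (x, 0)) x₀).hasFDerivAt
  obtain ⟨A, hA, B, hB, η, hη, hη0, hsol⟩ :=
    hφ.contDiffAt.exists_contDiffOn_lyapunovSchmidt (by norm_num) (by norm_num) hx₀ hderiv hN
      hp_range.le hp_id
  exact ⟨A, hA, B, hB, η, hη, hη0, fun ξε hξε _ => hsol ξε hξε⟩

/-- Lyapunov–Schmidt reduction: for a `C²` map `φ : ℝⁿ × ℝ → ℝⁿ` with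
`φ(x₀,0) = 0` and `L = D_xφ(x₀,0)` having nontrivial kernel, after choosing a
complement `N` of `ker L` and a projection `p` onto `range L`, there are
neighborhoods `A` of `(0,0)` and `B` of `0` and a `C²` map `η` with
`η(0,0) = 0` such that `η(ξ,ε)` is the unique element of `B ∩ N` solving
`p·φ(ξ + η(ξ,ε) + x₀, ε) = 0`. -/
theorem lyapunov_schmidt_reduction
    (n : ℕ) (φ : (Fin n → ℝ) × ℝ → (Fin n → ℝ)) (hφ : ContDiff ℝ 2 φ)
    (x₀ : Fin n → ℝ) (hx₀ : φ (x₀, 0) = 0)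
    (L : (Fin n → ℝ) →L[ℝ] (Fin n → ℝ))
    (hL : L = fderiv ℝ (fun x => φ (x, 0)) x₀)
    (hker : 0 < Module.finrank ℝ (LinearMap.ker (L : (Fin n → ℝ) →ₗ[ℝ] (Fin n → ℝ))))
    (N : Submodule ℝ (Fin n → ℝ)) (hN : IsCompl (LinearMap.ker (L : (Fin n → ℝ) →ₗ[ℝ] (Fin n → ℝ))) N)
    (R' : Submodule ℝ (Fin n → ℝ)) (hR' : IsCompl (LinearMap.range (L : (Fin n → ℝ) →ₗ[ℝ] (Fin n → ℝ))) R')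
    (p : (Fin n → ℝ) →ₗ[ℝ] (Fin n → ℝ))
    (hp_range : LinearMap.range p = LinearMap.range (L : (Fin n → ℝ) →ₗ[ℝ] (Fin n → ℝ)))
    (hp_ker : LinearMap.ker p = R')
    (hp_id : ∀ x ∈ LinearMap.range (L : (Fin n → ℝ) →ₗ[ℝ] (Fin n → ℝ)), p x = x) :
    ∃ A ∈ nhds ((0 : Fin n → ℝ), (0 : ℝ)), ∃ B ∈ nhds (0 : Fin n → ℝ),
      ∃ η : (Fin n → ℝ) × ℝ → (Fin n → ℝ),
        ContDiffOn ℝ 2 η A ∧ η (0, 0) = 0 ∧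
        ∀ ξε ∈ A, ξε.1 ∈ LinearMap.ker (L : (Fin n → ℝ) →ₗ[ℝ] (Fin n → ℝ)) →
          η ξε ∈ B ∧ η ξε ∈ N ∧
          p (φ (ξε.1 + η ξε + x₀, ξε.2)) = 0 ∧
          ∀ y ∈ B, y ∈ N → p (φ (ξε.1 + y + x₀, ξε.2)) = 0 → y = η ξε :=
  lyapunov_schmidt_reduction_general n φ hφ x₀ hx₀ L hL N hN p hp_range hp_id
end

section
/- Let A(t) = Df(γ(t)) where γ is a homoclinic orbit of the planar system ẋ = f(x) at a hyperbolic saddle, and let X(t) be the fundamental matrix with columns γ'(t) and ζ(t), Δ(t) = det X(t). Assume the exponential estimates |γᵢ'(t)ζⱼ(s)| < k e^{−ω(t−s)} for t ≥ s ≥ 0 and < k e^{ω(t−s)} for t ≤ s ≤ 0, and that Δ is bounded away from 0. Then for F ∈ C⁰_b(ℝ,ℝ²), the inhomogeneous equation ż − A(t)z = F(t) has a bounded solution if and only if ∫_ℝ (1/Δ(s)) f(γ(s)) ∧ F(s) ds = 0. -/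
/-!
Write `u = f ∘ γ = γ'`. Both `u` and `ζ` solve `ż = A(t) z`, and the identity
`Au ∧ v + u ∧ Av = tr A · (u ∧ v)` gives `(u ∧ z)' = tr A · (u ∧ z) + u ∧ F` for every solution
`z` of `ż = A(t) z + F`; as `Δ = u ∧ ζ` satisfies `Δ' = tr A · Δ`, this means
`((u ∧ z) / Δ)' = (u ∧ F) / Δ`.

The two dichotomy estimates combine into `‖u t‖ ‖ζ s‖ ≤ k e^{-ω|t-s|}` for `s` between `0` and `t`;
at `s = 0` this makes `u` decay like `e^{-ω|t|}`. So if `z` is bounded, `(u ∧ z) / Δ` vanishes at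
`±∞` and the integral of its derivative is zero. Conversely, variation of constants gives
`z = (∫₀ᵗ (F ∧ ζ) / Δ) u + (∫_{-∞}^t (u ∧ F) / Δ) ζ`. When the total integral vanishes the second
coefficient is also `-∫_t^∞ (u ∧ F) / Δ`, so both coefficients, multiplied by `‖u t‖` resp.
`‖ζ t‖`, are integrals against the kernel `e^{-ω|t-s|}` of mass `2/ω`.
-/

open MeasureTheory

open Set Filter Real Topology

theorem integral_exp_neg_mul_abs_sub {ω : ℝ} (hω : 0 < ω) (t : ℝ) :
    ∫ s, exp (-(ω * |s - t|)) = 2 / ω := by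
  rw [integral_sub_right_eq_self (fun s => exp (-(ω * |s|))),
    integral_comp_abs (f := fun s => exp (-(ω * s)))]
  simp_rw [← neg_mul]
  rw [integral_exp_mul_Ioi (neg_lt_zero.mpr hω)]
  field_simp
  simp

theorem integrable_exp_neg_mul_abs_sub {ω : ℝ} (hω : 0 < ω) (t : ℝ) :
    Integrable fun s => exp (-(ω * |s - t|)) :=
  .of_integral_ne_zero (by rw [integral_exp_neg_mul_abs_sub hω]; positivity)

theorem norm_setIntegral_le_of_norm_le_exp {E : Type*} [NormedAddCommGroup E] [NormedSpace ℝ E]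
    {S : Set ℝ} {h : ℝ → E} {C ω t : ℝ} (hω : 0 < ω) (hC : 0 ≤ C) (hS : MeasurableSet S)
    (hh : ∀ s ∈ S, ‖h s‖ ≤ C * exp (-(ω * |s - t|))) :
    ‖∫ s in S, h s‖ ≤ 2 * C / ω := by
  have hint := (integrable_exp_neg_mul_abs_sub hω t).const_mul C
  calc ‖∫ s in S, h s‖ ≤ ∫ s in S, C * exp (-(ω * |s - t|)) :=
        norm_integral_le_of_norm_le hint.integrableOn ((ae_restrict_iff' hS).mpr (.of_forall hh))
    _ ≤ ∫ s, C * exp (-(ω * |s - t|)) :=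
        setIntegral_le_integral hint (.of_forall fun _ => by positivity)
    _ = 2 * C / ω := by rw [integral_const_mul, integral_exp_neg_mul_abs_sub hω]; ring

theorem Continuous.hasDerivAt_integral_Iic {E : Type*} [NormedAddCommGroup E] [NormedSpace ℝ E]
    [CompleteSpace E] {g : ℝ → E} (hg : Continuous g) (hgi : Integrable g) (t : ℝ) :
    HasDerivAt (fun x => ∫ s in Iic x, g s) (g t) t := by
  have h : (fun x => ∫ s in Iic x, g s) = fun x => (∫ s in Iic 0, g s) + ∫ s in 0..x, g s := by
    funext x
    rw [← intervalIntegral.integral_Iic_sub_Iic hgi.integrableOn hgi.integrableOn]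
    abel
  rw [h]
  exact (hg.integral_hasStrictDerivAt 0 t).hasDerivAt.const_add _

theorem norm_mul_norm_le_of_abs_mul_le {ι : Type*} [Fintype ι] [Nonempty ι] {x y : ι → ℝ} {c : ℝ}
    (h : ∀ i j, |x i * y j| ≤ c) : ‖x‖ * ‖y‖ ≤ c := by
  have hc : 0 ≤ c := (abs_nonneg _).trans (h (Classical.arbitrary ι) (Classical.arbitrary ι))
  have hrow : ∀ i, ‖x i‖ * ‖y‖ ≤ c := fun i => by
    rw [← norm_smul]
    exact (pi_norm_le_iff_of_nonneg hc).2 fun j => by simpa using h i j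
  calc ‖x‖ * ‖y‖ = ‖‖y‖ • x‖ := by rw [norm_smul, norm_norm, mul_comm]
    _ ≤ c := (pi_norm_le_iff_of_nonneg hc).2 fun i => by
      rw [Pi.smul_apply, norm_smul, norm_norm, mul_comm]; exact hrow i

theorem HasDerivAt.div_of_hasDerivAt_mul {p d : ℝ → ℝ} {c q t : ℝ}
    (hp : HasDerivAt p (c * p t + q) t) (hd : HasDerivAt d (c * d t) t) (h0 : d t ≠ 0) :
    HasDerivAt (fun s => p s / d s) (q / d t) t := by
  refine (hp.div hd h0).congr_deriv ?_
  field_simp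
  ring

def wedge (u v : Fin 2 → ℝ) : ℝ := u 0 * v 1 - u 1 * v 0

@[simp]
theorem wedge_zero_right (u : Fin 2 → ℝ) : wedge u 0 = 0 := by
  simp [wedge]

theorem wedge_comm (u v : Fin 2 → ℝ) : wedge u v = -wedge v u := by
  simp only [wedge]; ring

theorem abs_wedge_le (u v : Fin 2 → ℝ) : |wedge u v| ≤ 2 * ‖u‖ * ‖v‖ := by
  have h : ∀ i j, |u i * v j| ≤ ‖u‖ * ‖v‖ := fun i j => by
    rw [abs_mul]
    exact mul_le_mul (norm_le_pi_norm u i) (norm_le_pi_norm v j) (abs_nonneg _) (norm_nonneg _)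
  calc |wedge u v| ≤ |u 0 * v 1| + |u 1 * v 0| := abs_sub _ _
    _ ≤ 2 * ‖u‖ * ‖v‖ := by linarith [h 0 1, h 1 0]

theorem abs_wedge_div_le {v w : Fin 2 → ℝ} {d m : ℝ} (hm : 0 < m) (hd : m ≤ |d|) :
    |wedge v w / d| ≤ 2 * ‖v‖ * ‖w‖ / m := by
  rw [abs_div]
  exact div_le_div₀ (by positivity) (abs_wedge_le v w) hm hd

theorem norm_wedge_div_smul_le {v w x : Fin 2 → ℝ} {d m M K : ℝ} (hm : 0 < m) (hd : m ≤ |d|)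
    (hw : ‖w‖ ≤ M) (hxv : ‖x‖ * ‖v‖ ≤ K) :
    ‖(wedge w v / d) • x‖ ≤ 2 * M * K / m := by
  rw [norm_smul, Real.norm_eq_abs]
  calc |wedge w v / d| * ‖x‖ ≤ 2 * ‖w‖ * ‖v‖ / m * ‖x‖ := by
        gcongr; exact abs_wedge_div_le hm hd
    _ = 2 * ‖w‖ * (‖x‖ * ‖v‖) / m := by ring
    _ ≤ 2 * M * K / m := by
        have : 0 ≤ ‖x‖ * ‖v‖ := by positivity
        gcongr; linarith [(norm_nonneg w).trans hw]

theorem wedge_map_add_wedge_map (L : (Fin 2 → ℝ) →ₗ[ℝ] (Fin 2 → ℝ)) (u v : Fin 2 → ℝ) :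
    wedge (L u) v + wedge u (L v) = LinearMap.trace ℝ _ L * wedge u v := by
  rw [LinearMap.trace_eq_matrix_trace ℝ (Pi.basisFun ℝ (Fin 2)), Matrix.trace_fin_two]
  simp only [LinearMap.toMatrix_apply, Pi.basisFun_apply, Pi.basisFun_repr]
  have hL : ∀ w : Fin 2 → ℝ, L w = w 0 • L (Pi.single 0 1) + w 1 • L (Pi.single 1 1) := by
    intro w
    conv_lhs => rw [show w = w 0 • Pi.single 0 1 + w 1 • Pi.single 1 1 by
      ext j; fin_cases j <;> simp]
    simp only [map_add, map_smul]
  rw [hL u, hL v]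
  simp only [wedge, Pi.add_apply, Pi.smul_apply, smul_eq_mul]
  ring

theorem wedge_div_smul_add_wedge_div_smul {u v : Fin 2 → ℝ} (h : wedge u v ≠ 0) (w : Fin 2 → ℝ) :
    (wedge w v / wedge u v) • u + (wedge u w / wedge u v) • v = w := by
  ext i
  simp only [Pi.add_apply, Pi.smul_apply, smul_eq_mul, div_mul_eq_mul_div, ← add_div,
    div_eq_iff h]
  fin_cases i <;> simp only [wedge, Fin.zero_eta, Fin.mk_one] <;> ring

theorem HasDerivAt.wedge {x y : ℝ → Fin 2 → ℝ} {x' y' : Fin 2 → ℝ} {t : ℝ}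
    (hx : HasDerivAt x x' t) (hy : HasDerivAt y y' t) :
    HasDerivAt (fun s => _root_.wedge (x s) (y s))
      (_root_.wedge x' (y t) + _root_.wedge (x t) y') t := by
  have hxi := hasDerivAt_pi.mp hx
  have hyi := hasDerivAt_pi.mp hy
  exact (((hxi 0).mul (hyi 1)).sub ((hxi 1).mul (hyi 0))).congr_deriv
    (by simp only [_root_.wedge]; ring)

theorem Continuous.wedge {x y : ℝ → Fin 2 → ℝ} (hx : Continuous x) (hy : Continuous y) :
    Continuous fun s => _root_.wedge (x s) (y s) := by
  unfold _root_.wedge; fun_prop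

section LinearSystem

variable {L : ℝ → (Fin 2 → ℝ) →L[ℝ] (Fin 2 → ℝ)} {u ζ z F : ℝ → Fin 2 → ℝ} {t : ℝ}

theorem hasDerivAt_wedge_of_linear (hu : HasDerivAt u (L t (u t)) t)
    (hz : HasDerivAt z (L t (z t) + F t) t) :
    HasDerivAt (fun s => wedge (u s) (z s))
      (LinearMap.trace ℝ _ (L t : (Fin 2 → ℝ) →ₗ[ℝ] (Fin 2 → ℝ)) * wedge (u t) (z t)
        + wedge (u t) (F t)) t := by
  refine (hu.wedge hz).congr_deriv ?_
  rw [← wedge_map_add_wedge_map]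
  simp only [wedge, ContinuousLinearMap.coe_coe, Pi.add_apply]
  ring

theorem hasDerivAt_wedge_div_wedge (hu : HasDerivAt u (L t (u t)) t)
    (hζ : HasDerivAt ζ (L t (ζ t)) t) (hz : HasDerivAt z (L t (z t) + F t) t)
    (h0 : wedge (u t) (ζ t) ≠ 0) :
    HasDerivAt (fun s => wedge (u s) (z s) / wedge (u s) (ζ s))
      (wedge (u t) (F t) / wedge (u t) (ζ t)) t := by
  have hΔ := hasDerivAt_wedge_of_linear (F := 0) hu (by simpa using hζ)
  simp only [Pi.zero_apply, wedge_zero_right, add_zero] at hΔ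
  exact (hasDerivAt_wedge_of_linear hu hz).div_of_hasDerivAt_mul hΔ h0

theorem hasDerivAt_smul_add_smul {A B : ℝ → ℝ} (hu : HasDerivAt u (L t (u t)) t)
    (hζ : HasDerivAt ζ (L t (ζ t)) t)
    (hA : HasDerivAt A (wedge (F t) (ζ t) / wedge (u t) (ζ t)) t)
    (hB : HasDerivAt B (wedge (u t) (F t) / wedge (u t) (ζ t)) t)
    (h0 : wedge (u t) (ζ t) ≠ 0) :
    HasDerivAt (fun s => A s • u s + B s • ζ s) (L t (A t • u t + B t • ζ t) + F t) t := by
  refine ((hA.smul hu).add (hB.smul hζ)).congr_deriv ?_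
  conv_rhs => rw [← wedge_div_smul_add_wedge_div_smul h0 (F t)]
  simp only [map_add, map_smul]
  abel

end LinearSystem

section ExponentialDichotomy

variable {L : ℝ → (Fin 2 → ℝ) →L[ℝ] (Fin 2 → ℝ)} {u ζ z F : ℝ → Fin 2 → ℝ} {ω k m M : ℝ}

theorem norm_le_of_dichotomy (hζ0 : ζ 0 ≠ 0)
    (hdich : ∀ t s, s ∈ uIcc 0 t → ‖u t‖ * ‖ζ s‖ ≤ k * exp (-(ω * |t - s|))) (t : ℝ) :
    ‖u t‖ ≤ k / ‖ζ 0‖ * exp (-(ω * |t|)) := by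
  have h := hdich t 0 left_mem_uIcc
  rw [sub_zero, ← le_div_iff₀ (norm_pos_iff.mpr hζ0)] at h
  rwa [div_mul_eq_mul_div]

theorem tendsto_cocompact_of_norm_le_exp {K : ℝ} (hω : 0 < ω)
    (h : ∀ t, ‖u t‖ ≤ K * exp (-(ω * |t|))) : Tendsto u (cocompact ℝ) (𝓝 0) := by
  refine squeeze_zero_norm h ?_
  have : Tendsto (fun t : ℝ => -(ω * |t|)) (cocompact ℝ) atBot :=
    tendsto_neg_atTop_atBot.comp ((tendsto_norm_cocompact_atTop).const_mul_atTop hω)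
  simpa using (tendsto_exp_atBot.comp this).const_mul K

theorem integrable_wedge_div {K : ℝ} (hω : 0 < ω) (hm : 0 < m) (hcont : Continuous u)
    (hΔc : Continuous fun t => wedge (u t) (ζ t)) (hΔ : ∀ t, m ≤ |wedge (u t) (ζ t)|)
    (hF : Continuous F) (hM : ∀ t, ‖F t‖ ≤ M)
    (hdecay : ∀ t, ‖u t‖ ≤ K * exp (-(ω * |t|))) :
    Integrable fun s => wedge (u s) (F s) / wedge (u s) (ζ s) := by
  have hΔ0 : ∀ t, wedge (u t) (ζ t) ≠ 0 := fun t => abs_pos.mp (hm.trans_le (hΔ t))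
  refine ((integrable_exp_neg_mul_abs_sub hω 0).const_mul (2 * K * M / m)).mono'
    ((hcont.wedge hF).div hΔc hΔ0).aestronglyMeasurable (.of_forall fun s => ?_)
  have hK : 0 ≤ K * exp (-(ω * |s|)) := (norm_nonneg _).trans (hdecay s)
  calc ‖wedge (u s) (F s) / wedge (u s) (ζ s)‖ ≤ 2 * ‖u s‖ * ‖F s‖ / m := abs_wedge_div_le hm (hΔ s)
    _ ≤ 2 * (K * exp (-(ω * |s|))) * M / m := by gcongr; exacts [hdecay s, hM s]
    _ = 2 * K * M / m * exp (-(ω * |s - 0|)) := by rw [sub_zero]; ring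

theorem integral_wedge_div_eq_zero_of_bounded_solution {C : ℝ}
    (hu : ∀ t, HasDerivAt u (L t (u t)) t) (hζ : ∀ t, HasDerivAt ζ (L t (ζ t)) t)
    (hm : 0 < m) (hΔ : ∀ t, m ≤ |wedge (u t) (ζ t)|) (hu0 : Tendsto u (cocompact ℝ) (𝓝 0))
    (hg : Integrable fun s => wedge (u s) (F s) / wedge (u s) (ζ s))
    (hz : ∀ t, HasDerivAt z (L t (z t) + F t) t) (hzC : ∀ t, ‖z t‖ ≤ C) :
    ∫ s, wedge (u s) (F s) / wedge (u s) (ζ s) = 0 := by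
  have hΔ0 : ∀ t, wedge (u t) (ζ t) ≠ 0 := fun t => abs_pos.mp (hm.trans_le (hΔ t))
  have hB : Tendsto (fun t => wedge (u t) (z t) / wedge (u t) (ζ t)) (cocompact ℝ) (𝓝 0) := by
    refine squeeze_zero_norm (a := fun t => 2 * C / m * ‖u t‖) (fun t => ?_) ?_
    · calc ‖wedge (u t) (z t) / wedge (u t) (ζ t)‖ ≤ 2 * ‖u t‖ * ‖z t‖ / m :=
            abs_wedge_div_le hm (hΔ t)
        _ ≤ 2 * ‖u t‖ * C / m := by gcongr; exact hzC t
        _ = 2 * C / m * ‖u t‖ := by ring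
    · simpa using hu0.norm.const_mul (2 * C / m)
  simpa using integral_of_hasDerivAt_of_tendsto
    (fun t => hasDerivAt_wedge_div_wedge (hu t) (hζ t) (hz t) (hΔ0 t)) hg
    (hB.mono_left atBot_le_cocompact) (hB.mono_left atTop_le_cocompact)

theorem norm_intervalIntegral_wedge_div_smul_le (hω : 0 < ω) (hk : 0 ≤ k) (hm : 0 < m)
    (hΔ : ∀ t, m ≤ |wedge (u t) (ζ t)|)
    (hdich : ∀ t s, s ∈ uIcc 0 t → ‖u t‖ * ‖ζ s‖ ≤ k * exp (-(ω * |t - s|)))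
    (hM : ∀ t, ‖F t‖ ≤ M) (t : ℝ) :
    ‖(∫ s in 0..t, wedge (F s) (ζ s) / wedge (u s) (ζ s)) • u t‖ ≤ 2 * (2 * M * k / m) / ω := by
  have hM0 : 0 ≤ M := (norm_nonneg _).trans (hM 0)
  rw [← intervalIntegral.integral_smul_const, intervalIntegral.norm_integral_eq_norm_integral_uIoc]
  refine norm_setIntegral_le_of_norm_le_exp (t := t) hω (by positivity) measurableSet_uIoc
    fun s hs => ?_
  rw [abs_sub_comm]
  exact (norm_wedge_div_smul_le hm (hΔ s) (hM s) (hdich t s (uIoc_subset_uIcc hs))).trans_eq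
    (by ring)

theorem norm_integral_Iic_wedge_div_smul_le (hω : 0 < ω) (hk : 0 ≤ k) (hm : 0 < m)
    (hΔ : ∀ t, m ≤ |wedge (u t) (ζ t)|)
    (hdich : ∀ t s, s ∈ uIcc 0 t → ‖u t‖ * ‖ζ s‖ ≤ k * exp (-(ω * |t - s|)))
    (hM : ∀ t, ‖F t‖ ≤ M) (hg : Integrable fun s => wedge (u s) (F s) / wedge (u s) (ζ s))
    (h0 : ∫ s, wedge (u s) (F s) / wedge (u s) (ζ s) = 0) (t : ℝ) :
    ‖(∫ s in Iic t, wedge (u s) (F s) / wedge (u s) (ζ s)) • ζ t‖ ≤ 2 * (2 * M * k / m) / ω := by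
  have hM0 : 0 ≤ M := (norm_nonneg _).trans (hM 0)
  have hset : ∀ S, MeasurableSet S → (∀ s ∈ S, t ∈ uIcc 0 s) →
      ‖∫ s in S, (wedge (u s) (F s) / wedge (u s) (ζ s)) • ζ t‖ ≤ 2 * (2 * M * k / m) / ω := by
    refine fun S hS hSt => norm_setIntegral_le_of_norm_le_exp (t := t) hω (by positivity) hS
      fun s hs => ?_
    rw [wedge_comm, neg_div, neg_smul, norm_neg]
    exact (norm_wedge_div_smul_le hm (hΔ s) (hM s)
      (mul_comm ‖ζ t‖ _ ▸ hdich s t (hSt s hs))).trans_eq (by ring)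
  rcases le_total t 0 with ht | ht
  · rw [← integral_smul_const]
    exact hset _ measurableSet_Iic fun s hs => mem_uIcc.mpr (.inr ⟨hs, ht⟩)
  · have hsplit := intervalIntegral.integral_Iic_add_Ioi hg.integrableOn hg.integrableOn (b := t)
    rw [h0, add_eq_zero_iff_eq_neg] at hsplit
    rw [hsplit, neg_smul, norm_neg, ← integral_smul_const]
    exact hset _ measurableSet_Ioi fun s hs => mem_uIcc.mpr (.inl ⟨ht, le_of_lt hs⟩)

theorem exists_bounded_solution_of_integral_wedge_div_eq_zero (hω : 0 < ω) (hk : 0 ≤ k)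
    (hm : 0 < m) (hu : ∀ t, HasDerivAt u (L t (u t)) t) (hζ : ∀ t, HasDerivAt ζ (L t (ζ t)) t)
    (hΔ : ∀ t, m ≤ |wedge (u t) (ζ t)|)
    (hdich : ∀ t s, s ∈ uIcc 0 t → ‖u t‖ * ‖ζ s‖ ≤ k * exp (-(ω * |t - s|)))
    (hF : Continuous F) (hM : ∀ t, ‖F t‖ ≤ M)
    (hg : Integrable fun s => wedge (u s) (F s) / wedge (u s) (ζ s))
    (h0 : ∫ s, wedge (u s) (F s) / wedge (u s) (ζ s) = 0) :
    ∃ z : ℝ → Fin 2 → ℝ, (∀ t, HasDerivAt z (L t (z t) + F t) t) ∧ ∃ C, ∀ t, ‖z t‖ ≤ C := by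
  have hΔ0 : ∀ t, wedge (u t) (ζ t) ≠ 0 := fun t => abs_pos.mp (hm.trans_le (hΔ t))
  have huc : Continuous u := continuous_iff_continuousAt.2 fun t => (hu t).continuousAt
  have hζc : Continuous ζ := continuous_iff_continuousAt.2 fun t => (hζ t).continuousAt
  have hΔc := huc.wedge hζc
  refine ⟨fun t => (∫ s in 0..t, wedge (F s) (ζ s) / wedge (u s) (ζ s)) • u t
      + (∫ s in Iic t, wedge (u s) (F s) / wedge (u s) (ζ s)) • ζ t,
    fun t => hasDerivAt_smul_add_smul (hu t) (hζ t) ?_ ?_ (hΔ0 t),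
    2 * (2 * M * k / m) / ω + 2 * (2 * M * k / m) / ω, fun t => ?_⟩
  · exact (((hF.wedge hζc).div hΔc hΔ0).integral_hasStrictDerivAt 0 t).hasDerivAt
  · exact ((huc.wedge hF).div hΔc hΔ0).hasDerivAt_integral_Iic hg t
  · exact (norm_add_le _ _).trans (add_le_add
      (norm_intervalIntegral_wedge_div_smul_le hω hk hm hΔ hdich hM t)
      (norm_integral_Iic_wedge_div_smul_le hω hk hm hΔ hdich hM hg h0 t))

theorem exists_bounded_solution_iff_integral_wedge_div_eq_zero (hω : 0 < ω) (hk : 0 ≤ k)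
    (hm : 0 < m) (hu : ∀ t, HasDerivAt u (L t (u t)) t) (hζ : ∀ t, HasDerivAt ζ (L t (ζ t)) t)
    (hΔ : ∀ t, m ≤ |wedge (u t) (ζ t)|)
    (hdich : ∀ t s, s ∈ uIcc 0 t → ‖u t‖ * ‖ζ s‖ ≤ k * exp (-(ω * |t - s|)))
    (hF : Continuous F) (hM : ∀ t, ‖F t‖ ≤ M) :
    (∃ z : ℝ → Fin 2 → ℝ, (∀ t, HasDerivAt z (L t (z t) + F t) t) ∧ ∃ C, ∀ t, ‖z t‖ ≤ C) ↔
      ∫ s, wedge (u s) (F s) / wedge (u s) (ζ s) = 0 := by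
  have hζ0 : ζ 0 ≠ 0 := fun h => by
    have := hΔ 0
    rw [h, wedge_zero_right, abs_zero] at this
    linarith
  have huc : Continuous u := continuous_iff_continuousAt.2 fun t => (hu t).continuousAt
  have hζc : Continuous ζ := continuous_iff_continuousAt.2 fun t => (hζ t).continuousAt
  have hdecay := norm_le_of_dichotomy hζ0 hdich
  have hg := integrable_wedge_div hω hm huc (huc.wedge hζc) hΔ hF hM hdecay
  constructor
  · rintro ⟨z, hz, C, hzC⟩
    exact integral_wedge_div_eq_zero_of_bounded_solution hu hζ hm hΔ
      (tendsto_cocompact_of_norm_le_exp hω hdecay) hg hz hzC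
  · exact exists_bounded_solution_of_integral_wedge_div_eq_zero hω hk hm hu hζ hΔ hdich hF hM hg

end ExponentialDichotomy

theorem bounded_solution_criterion_general
    (f : (Fin 2 → ℝ) → (Fin 2 → ℝ)) (hf : ContDiff ℝ 2 f)
    (ω : ℝ) (hω : ω > 0)
    (γ : ℝ → Fin 2 → ℝ) (hγ : ∀ t, HasDerivAt γ (f (γ t)) t)
    (ζ : ℝ → Fin 2 → ℝ)
    (hζ : ∀ t, HasDerivAt ζ (fderiv ℝ f (γ t) (ζ t)) t)
    (Δ : ℝ → ℝ)
    (hΔdef : ∀ t, Δ t = deriv γ t 0 * ζ t 1 - deriv γ t 1 * ζ t 0)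
    (hΔ : ∃ m > 0, ∀ t, m ≤ |Δ t|)
    (hdich : ∃ k > 0, ∀ (i j : Fin 2) (t s : ℝ),
      (0 ≤ s → s ≤ t → |deriv γ t i * ζ s j| < k * Real.exp (-(ω * (t - s)))) ∧
      (t ≤ s → s ≤ 0 → |deriv γ t i * ζ s j| < k * Real.exp (ω * (t - s))))
    (F : ℝ → Fin 2 → ℝ) (hFc : Continuous F) (hFb : ∃ M, ∀ t, ‖F t‖ ≤ M) :
    (∃ z : ℝ → Fin 2 → ℝ,
        (∀ t, HasDerivAt z (fderiv ℝ f (γ t) (z t) + F t) t) ∧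
        ∃ M, ∀ t, ‖z t‖ ≤ M) ↔
      ∫ s, (1 / Δ s) * (f (γ s) 0 * F s 1 - f (γ s) 1 * F s 0) = 0 := by
  obtain ⟨m, hm, hmΔ⟩ := hΔ
  obtain ⟨k, hk, hdich⟩ := hdich
  obtain ⟨M, hM⟩ := hFb
  have hderiv : ∀ t, deriv γ t = f (γ t) := fun t => (hγ t).deriv
  have hu : ∀ t, HasDerivAt (fun t => f (γ t)) (fderiv ℝ f (γ t) (f (γ t))) t := fun t =>
    ((hf.differentiable (by norm_num)) (γ t)).hasFDerivAt.comp_hasDerivAt t (hγ t)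
  have hΔwedge : ∀ t, Δ t = wedge (f (γ t)) (ζ t) := fun t => by rw [hΔdef, hderiv]; rfl
  have hdich' : ∀ t s, s ∈ uIcc 0 t → ‖f (γ t)‖ * ‖ζ s‖ ≤ k * exp (-(ω * |t - s|)) := by
    intro t s hs
    refine norm_mul_norm_le_of_abs_mul_le fun i j => ?_
    rw [← hderiv]
    rcases mem_uIcc.mp hs with ⟨h0s, hst⟩ | ⟨hts, hs0⟩
    · rw [abs_of_nonneg (sub_nonneg.2 hst)]
      exact ((hdich i j t s).1 h0s hst).le
    · rw [abs_of_nonpos (sub_nonpos.2 hts), mul_neg, neg_neg]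
      exact ((hdich i j t s).2 hts hs0).le
  convert exists_bounded_solution_iff_integral_wedge_div_eq_zero hω hk.le hm hu hζ
    (fun t => hΔwedge t ▸ hmΔ t) hdich' hFc hM using 2
  simp only [hΔwedge, one_div_mul_eq_div]
  rfl

/-- Bounded-solution criterion: under the exponential dichotomy estimates along
a homoclinic orbit `γ` of `ẋ = f(x)` with second solution `ζ` of the
variational equation and Wronskian `Δ` bounded away from zero, the
inhomogeneous equation `ż − Df(γ(t))z = F(t)` with `F` bounded continuous has
a bounded solution iff `∫_ℝ (1/Δ(s)) f(γ(s)) ∧ F(s) ds = 0`. -/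
theorem bounded_solution_criterion
    (f : (Fin 2 → ℝ) → (Fin 2 → ℝ)) (hf : ContDiff ℝ 2 f)
    (ω : ℝ) (hω : ω > 0)
    (γ : ℝ → Fin 2 → ℝ) (hγ : ∀ t, HasDerivAt γ (f (γ t)) t)
    (hγ0 : Filter.Tendsto γ Filter.atTop (nhds 0))
    (hγ0' : Filter.Tendsto γ Filter.atBot (nhds 0))
    (ζ : ℝ → Fin 2 → ℝ)
    (hζ : ∀ t, HasDerivAt ζ (fderiv ℝ f (γ t) (ζ t)) t)
    (Δ : ℝ → ℝ)
    (hΔdef : ∀ t, Δ t = deriv γ t 0 * ζ t 1 - deriv γ t 1 * ζ t 0)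
    (hΔ : ∃ m > 0, ∀ t, m ≤ |Δ t|)
    (hdich : ∃ k > 0, ∀ (i j : Fin 2) (t s : ℝ),
      (0 ≤ s → s ≤ t → |deriv γ t i * ζ s j| < k * Real.exp (-(ω * (t - s)))) ∧
      (t ≤ s → s ≤ 0 → |deriv γ t i * ζ s j| < k * Real.exp (ω * (t - s))))
    (F : ℝ → Fin 2 → ℝ) (hFc : Continuous F) (hFb : ∃ M, ∀ t, ‖F t‖ ≤ M) :
    (∃ z : ℝ → Fin 2 → ℝ,
        (∀ t, HasDerivAt z (fderiv ℝ f (γ t) (z t) + F t) t) ∧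
        ∃ M, ∀ t, ‖z t‖ ≤ M) ↔
      ∫ s, (1 / Δ s) * (f (γ s) 0 * F s 1 - f (γ s) 1 * F s 0) = 0 :=
  bounded_solution_criterion_general f hf ω hω γ hγ ζ hζ Δ hΔdef hΔ hdich F hFc hFb
end

section
/- Let L : C¹_b(ℝ,ℝ²) → C⁰_b(ℝ,ℝ²) be defined by (Lz)(t) = ż(t) − A(t)z(t) with A(t) = Df(γ(t)) as above. Then the kernel of L equals {ξ·γ'(·) : ξ ∈ ℝ}, a one-dimensional subspace. -/
/-!
Any solution `z` of the variational equation `ż = Df(γ(t)) z` is a combination `a γ' + b ζ` with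
constant coefficients: by Liouville's formula all Wronskians of solutions satisfy the same scalar
equation `W' = tr(Df(γ)) W`, so the Wronskians `W(z, ζ)` and `W(γ', z)` are constant multiples of
the nonvanishing `W(γ', ζ)`, and Cramer's rule turns these constants into the coefficients. If `z` is
bounded, so is `b ζ = z - a γ'`, which forces `b = 0` since `ζ` is unbounded.
-/

def wronskian (u v : Fin 2 → ℝ) : ℝ := u 0 * v 1 - u 1 * v 0

theorem wronskian_smul_eq (u v w : Fin 2 → ℝ) :
    wronskian u v • w = wronskian w v • u + wronskian u w • v := by
  funext i
  fin_cases i <;> simp [wronskian] <;> ring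

theorem trace_fin_two_eq (A : (Fin 2 → ℝ) →ₗ[ℝ] (Fin 2 → ℝ)) :
    LinearMap.trace ℝ _ A = A (Pi.single 0 1) 0 + A (Pi.single 1 1) 1 := by
  rw [LinearMap.trace_eq_matrix_trace ℝ (Pi.basisFun ℝ (Fin 2)), Matrix.trace_fin_two]
  simp

theorem wronskian_map_add_wronskian_map (A : (Fin 2 → ℝ) →ₗ[ℝ] (Fin 2 → ℝ)) (u v : Fin 2 → ℝ) :
    wronskian (A u) v + wronskian u (A v) = LinearMap.trace ℝ _ A * wronskian u v := by
  have hA : ∀ w : Fin 2 → ℝ, A w = w 0 • A (Pi.single 0 1) + w 1 • A (Pi.single 1 1) := by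
    intro w
    have hw : w = w 0 • Pi.single 0 1 + w 1 • Pi.single 1 1 := by
      funext i; fin_cases i <;> simp
    conv_lhs => rw [hw, map_add, map_smul, map_smul]
  rw [trace_fin_two_eq, hA u, hA v]
  simp only [wronskian, Pi.add_apply, Pi.smul_apply, smul_eq_mul]
  ring

theorem HasDerivAt.wronskian {u v : ℝ → Fin 2 → ℝ} {u' v' : Fin 2 → ℝ} {t : ℝ}
    (hu : HasDerivAt u u' t) (hv : HasDerivAt v v' t) :
    HasDerivAt (fun s => wronskian (u s) (v s)) (wronskian u' (v t) + wronskian (u t) v') t := by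
  have hu' := hasDerivAt_pi.1 hu
  have hv' := hasDerivAt_pi.1 hv
  exact (((hu' 0).mul (hv' 1)).sub ((hu' 1).mul (hv' 0))).congr_deriv
    (by simp only [_root_.wronskian]; ring)

section LinearSystem

variable {A : ℝ → (Fin 2 → ℝ) →L[ℝ] (Fin 2 → ℝ)} {u v w : ℝ → Fin 2 → ℝ}

/-- Liouville's formula for a planar linear system `x' = A(t) x`. -/
theorem hasDerivAt_wronskian_of_linear (hu : ∀ t, HasDerivAt u (A t (u t)) t)
    (hv : ∀ t, HasDerivAt v (A t (v t)) t) (t : ℝ) :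
    HasDerivAt (fun s => wronskian (u s) (v s))
      (LinearMap.trace ℝ _ (A t : (Fin 2 → ℝ) →ₗ[ℝ] (Fin 2 → ℝ)) * wronskian (u t) (v t)) t := by
  rw [← wronskian_map_add_wronskian_map]
  exact (hu t).wronskian (hv t)

theorem exists_eq_const_mul_of_hasDerivAt_mul {N D c : ℝ → ℝ}
    (hN : ∀ t, HasDerivAt N (c t * N t) t) (hD : ∀ t, HasDerivAt D (c t * D t) t)
    (hD0 : ∀ t, D t ≠ 0) : ∃ a, ∀ t, N t = a * D t := by
  have hquot : ∀ t, HasDerivAt (fun s => N s / D s) 0 t := by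
    intro t
    have h := (hN t).div (hD t) (hD0 t)
    rwa [show c t * N t * D t - N t * (c t * D t) = 0 by ring, zero_div] at h
  refine ⟨N 0 / D 0, fun t => ?_⟩
  rw [← is_const_of_deriv_eq_zero (fun s => (hquot s).differentiableAt)
    (fun s => (hquot s).deriv) t 0, div_mul_cancel₀ _ (hD0 t)]

theorem exists_eq_smul_add_smul_of_linear (hu : ∀ t, HasDerivAt u (A t (u t)) t)
    (hv : ∀ t, HasDerivAt v (A t (v t)) t) (hw : ∀ t, HasDerivAt w (A t (w t)) t)
    (huv : ∀ t, wronskian (u t) (v t) ≠ 0) :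
    ∃ a b : ℝ, ∀ t, w t = a • u t + b • v t := by
  have hW := hasDerivAt_wronskian_of_linear hu hv
  obtain ⟨a, ha⟩ := exists_eq_const_mul_of_hasDerivAt_mul
    (hasDerivAt_wronskian_of_linear hw hv) hW huv
  obtain ⟨b, hb⟩ := exists_eq_const_mul_of_hasDerivAt_mul
    (hasDerivAt_wronskian_of_linear hu hw) hW huv
  refine ⟨a, b, fun t => smul_right_injective _ (huv t) ?_⟩
  simp only [wronskian_smul_eq (u t) (v t) (w t), ha, hb, smul_add, mul_comm _ (wronskian _ _),
    mul_smul]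

end LinearSystem

theorem eq_zero_of_bounded_smul_add {E : Type*} [NormedAddCommGroup E] [NormedSpace ℝ E]
    {z g ζ : ℝ → E} {a b : ℝ} (hz : ∃ M, ∀ t, ‖z t‖ ≤ M) (hg : ∃ M, ∀ t, ‖g t‖ ≤ M)
    (hζ : ¬ ∃ M, ∀ t, ‖ζ t‖ ≤ M) (hzgζ : ∀ t, z t = a • g t + b • ζ t) : b = 0 := by
  by_contra hb
  obtain ⟨Mz, hMz⟩ := hz
  obtain ⟨Mg, hMg⟩ := hg
  refine hζ ⟨|b⁻¹| * (Mz + |a| * Mg), fun t => ?_⟩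
  have hζt : ζ t = b⁻¹ • (z t - a • g t) := by
    rw [hzgζ t, add_sub_cancel_left, smul_smul, inv_mul_cancel₀ hb, one_smul]
  rw [hζt, norm_smul, Real.norm_eq_abs]
  gcongr
  calc ‖z t - a • g t‖ ≤ ‖z t‖ + ‖a • g t‖ := norm_sub_le _ _
    _ ≤ Mz + |a| * Mg := by
      rw [norm_smul, Real.norm_eq_abs]
      gcongr
      exacts [hMz t, hMg t]

/-- The kernel of `L : C¹_b → C⁰_b`, `(Lz)(t) = ż(t) − Df(γ(t))z(t)`, along a
homoclinic orbit `γ` whose second independent variational solution `ζ` is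
unbounded, is exactly the one-dimensional space `{ξ·γ'(·) : ξ ∈ ℝ}`. -/
theorem kernel_of_variational_operator
    (f : (Fin 2 → ℝ) → (Fin 2 → ℝ)) (hf : ContDiff ℝ 2 f)
    (γ : ℝ → Fin 2 → ℝ) (hγ : ∀ t, HasDerivAt γ (f (γ t)) t)
    (hγ'b : ∃ M, ∀ t, ‖deriv γ t‖ ≤ M)
    (ζ : ℝ → Fin 2 → ℝ)
    (hζ : ∀ t, HasDerivAt ζ (fderiv ℝ f (γ t) (ζ t)) t)
    (hζub : ¬ ∃ M, ∀ t, ‖ζ t‖ ≤ M)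
    (hindep : ∀ t, deriv γ t 0 * ζ t 1 - deriv γ t 1 * ζ t 0 ≠ 0) :
    (∀ z : ℝ → Fin 2 → ℝ,
        (∀ t, HasDerivAt z (fderiv ℝ f (γ t) (z t)) t) →
        (∃ M, ∀ t, ‖z t‖ ≤ M) →
        ∃ ξ : ℝ, z = fun t => ξ • deriv γ t) ∧
    (∀ ξ : ℝ,
        (∀ t, HasDerivAt (fun s => ξ • deriv γ s)
          (fderiv ℝ f (γ t) (ξ • deriv γ t)) t) ∧
        ∃ M, ∀ t, ‖ξ • deriv γ t‖ ≤ M) := by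
  have hderiv : deriv γ = fun t => f (γ t) := funext fun t => (hγ t).deriv
  have hγ' : ∀ t, HasDerivAt (deriv γ) (fderiv ℝ f (γ t) (deriv γ t)) t := by
    rw [hderiv]
    exact fun t => ((hf.differentiable (by norm_num) (γ t)).hasFDerivAt).comp_hasDerivAt t (hγ t)
  refine ⟨fun z hz hzb => ?_, fun ξ => ⟨fun t => ?_, ?_⟩⟩
  · obtain ⟨a, b, hab⟩ := exists_eq_smul_add_smul_of_linear hγ' hζ hz hindep
    obtain rfl := eq_zero_of_bounded_smul_add hzb hγ'b hζub hab
    exact ⟨a, funext fun t => by simpa using hab t⟩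
  · rw [map_smul]
    exact (hγ' t).const_smul ξ
  · obtain ⟨M, hM⟩ := hγ'b
    exact ⟨|ξ| * M, fun t => by rw [norm_smul, Real.norm_eq_abs]; gcongr; exact hM t⟩
end
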